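/- Let d be even and suppose {X*, Y*, Λ*} satisfies the perturbed optimality system with parameter τ (X* minimizes ⟨−Λ* − τY*, X⟩ over C, Sym(Λ*) = A, X* = Y*, Mat(Λ*) symmetric). Let σ_1 ≥ ... ≥ σ_{N} (N = n^{d/2}) be the eigenvalues of −Mat(Λ*) and assume the smallest eigenvalue σ_N is simple. If 0 < τ < σ_{N−1} − σ_N, then ⟨−Λ*, X − X*⟩ ≥ 0 for all X ∈ C; i.e., X* minimizes ⟨−Λ*, ·⟩ over C and the triple satisfies the unperturbed KKT system. -/

import Mathlib

/-!
Write `M = -Mat(Λ*)`, `X* = z* z*ᵀ` and `c = ⟨z*, z_N⟩` for the unit eigenvector `z_N` of the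
smallest eigenvalue `σ_N`. On rank-one tensors the perturbed objective is
`z ↦ zᵀ M z - τ ⟨z, z*⟩²`. Comparing `X*` with `z_N z_Nᵀ` gives `z*ᵀ M z* - τ ≤ σ_N - τ c²`,
while splitting `z*` along `z_N` and its orthogonal complement gives
`z*ᵀ M z* ≥ σ_N c² + σ_{N-1} (1 - c²)`. Together `(σ_{N-1} - σ_N - τ)(1 - c²) ≤ 0`, so `c² = 1`
and `z*ᵀ M z* ≤ σ_N`, which is the minimum of the Rayleigh quotient since `σ_N ≤ σ_{N-1}`.
-/

open scoped BigOperators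
open Matrix

namespace SpherePoly

noncomputable def tinner {n d : ℕ} (A B : (Fin d → Fin n) → ℝ) : ℝ :=
  ∑ i : Fin d → Fin n, A i * B i

noncomputable def symT {n d : ℕ} (A : (Fin d → Fin n) → ℝ) : (Fin d → Fin n) → ℝ :=
  fun i => (∑ π : Equiv.Perm (Fin d), A (i ∘ π)) / (Nat.factorial d : ℝ)

def IsSymT {n d : ℕ} (A : (Fin d → Fin n) → ℝ) : Prop :=
  ∀ (π : Equiv.Perm (Fin d)) (i : Fin d → Fin n), A (i ∘ π) = A i

def mat2 {n m : ℕ} (X : (Fin (2 * m) → Fin n) → ℝ) :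
    Matrix (Fin m → Fin n) (Fin m → Fin n) ℝ :=
  fun a b => X fun i => Sum.elim a b (finSumFinEquiv.symm (Fin.cast (by omega) i))

def CSet (n m : ℕ) : Set ((Fin (2 * m) → Fin n) → ℝ) :=
  {X | ∃ z : (Fin m → Fin n) → ℝ, (∑ a, z a ^ 2 = 1) ∧ ∀ a b, mat2 X a b = z a * z b}

section Rayleigh

variable {ι : Type*} [Fintype ι] {M : Matrix ι ι ℝ} {v : ι → ℝ} {σ μ : ℝ}

lemma dotProduct_self_eq_sum_sq (z : ι → ℝ) : z ⬝ᵥ z = ∑ a, z a ^ 2 := by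
  simp only [dotProduct, sq]

lemma sub_proj_dotProduct_eq_zero (hv : v ⬝ᵥ v = 1) (z : ι → ℝ) :
    (z - (z ⬝ᵥ v) • v) ⬝ᵥ v = 0 := by
  rw [sub_dotProduct, smul_dotProduct, hv, smul_eq_mul, mul_one, sub_self]

lemma sub_proj_dotProduct_self (hv : v ⬝ᵥ v = 1) (z : ι → ℝ) :
    (z - (z ⬝ᵥ v) • v) ⬝ᵥ (z - (z ⬝ᵥ v) • v) = z ⬝ᵥ z - (z ⬝ᵥ v) ^ 2 := by
  simp only [sub_dotProduct, dotProduct_sub, smul_dotProduct, dotProduct_smul, hv,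
    dotProduct_comm v z, smul_eq_mul]
  ring

lemma sq_dotProduct_le_of_dotProduct_self_eq_one (hv : v ⬝ᵥ v = 1) (z : ι → ℝ) :
    (z ⬝ᵥ v) ^ 2 ≤ z ⬝ᵥ z := by
  have := dotProduct_self_star_nonneg (z - (z ⬝ᵥ v) • v)
  rw [star_trivial, sub_proj_dotProduct_self hv] at this
  linarith

lemma dotProduct_mulVec_eq_of_eigenvector (hM : M.IsSymm) (hv : v ⬝ᵥ v = 1)
    (heig : M *ᵥ v = σ • v) (z : ι → ℝ) :
    z ⬝ᵥ (M *ᵥ z) =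
      σ * (z ⬝ᵥ v) ^ 2 + (z - (z ⬝ᵥ v) • v) ⬝ᵥ (M *ᵥ (z - (z ⬝ᵥ v) • v)) := by
  set c := z ⬝ᵥ v
  set w := z - c • v
  have hwv : w ⬝ᵥ v = 0 := sub_proj_dotProduct_eq_zero hv z
  have hcross : v ⬝ᵥ (M *ᵥ w) = 0 := by
    rw [dotProduct_mulVec, ← mulVec_transpose, hM.eq, heig, smul_dotProduct, dotProduct_comm,
      hwv, smul_zero]
  have hz : z = w + c • v := (sub_add_cancel z _).symm
  rw [hz, mulVec_add, mulVec_smul, heig]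
  simp only [add_dotProduct, dotProduct_add, smul_dotProduct, dotProduct_smul, hcross, hwv, hv,
    smul_eq_mul]
  ring

lemma dotProduct_mulVec_ge_of_eigenvector (hM : M.IsSymm) (hv : v ⬝ᵥ v = 1)
    (heig : M *ᵥ v = σ • v) (hsecond : ∀ w, w ⬝ᵥ v = 0 → μ * (w ⬝ᵥ w) ≤ w ⬝ᵥ (M *ᵥ w))
    (z : ι → ℝ) :
    σ * (z ⬝ᵥ v) ^ 2 + μ * (z ⬝ᵥ z - (z ⬝ᵥ v) ^ 2) ≤ z ⬝ᵥ (M *ᵥ z) := by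
  have h := hsecond _ (sub_proj_dotProduct_eq_zero hv z)
  rw [sub_proj_dotProduct_self hv] at h
  rw [dotProduct_mulVec_eq_of_eigenvector hM hv heig]
  linarith

lemma eigenvalue_le_dotProduct_mulVec (hM : M.IsSymm) (hv : v ⬝ᵥ v = 1)
    (heig : M *ᵥ v = σ • v) (hsecond : ∀ w, w ⬝ᵥ v = 0 → μ * (w ⬝ᵥ w) ≤ w ⬝ᵥ (M *ᵥ w))
    (hσμ : σ ≤ μ) {z : ι → ℝ} (hz : z ⬝ᵥ z = 1) :
    σ ≤ z ⬝ᵥ (M *ᵥ z) := by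
  have h := dotProduct_mulVec_ge_of_eigenvector hM hv heig hsecond z
  have hc := sq_dotProduct_le_of_dotProduct_self_eq_one hv z
  rw [hz] at h hc
  nlinarith

/-- `hpert` says that `z` does no worse than `v` for `y ↦ yᵀ M y - τ ⟨y, z⟩²`. -/
lemma dotProduct_mulVec_le_eigenvalue_of_perturbed (hM : M.IsSymm) (hv : v ⬝ᵥ v = 1)
    (heig : M *ᵥ v = σ • v) (hsecond : ∀ w, w ⬝ᵥ v = 0 → μ * (w ⬝ᵥ w) ≤ w ⬝ᵥ (M *ᵥ w))
    {τ : ℝ} (hτ : τ < μ - σ) {z : ι → ℝ} (hz : z ⬝ᵥ z = 1)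
    (hpert : z ⬝ᵥ (M *ᵥ z) - τ ≤ σ - τ * (z ⬝ᵥ v) ^ 2) :
    z ⬝ᵥ (M *ᵥ z) ≤ σ := by
  have h := dotProduct_mulVec_ge_of_eigenvector hM hv heig hsecond z
  have hc := sq_dotProduct_le_of_dotProduct_self_eq_one hv z
  rw [hz] at h hc
  have hgap : (μ - σ - τ) * (1 - (z ⬝ᵥ v) ^ 2) ≤ 0 := by linarith
  have hc1 : (z ⬝ᵥ v) ^ 2 = 1 := by
    linarith [nonpos_of_mul_nonpos_right hgap (by linarith : 0 < μ - σ - τ)]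
  rw [hc1] at hpert
  linarith

end Rayleigh

section Tensor

variable {n m : ℕ}

def idxEquiv (n m : ℕ) : (Fin (2 * m) → Fin n) ≃ ((Fin m → Fin n) × (Fin m → Fin n)) :=
  (Equiv.arrowCongr ((finCongr (by omega : 2 * m = m + m)).trans finSumFinEquiv.symm)
    (Equiv.refl (Fin n))).trans (Equiv.sumArrowEquivProdArrow _ _ _)

lemma mat2_apply (X : (Fin (2 * m) → Fin n) → ℝ) (a b : Fin m → Fin n) :
    mat2 X a b = X ((idxEquiv n m).symm (a, b)) :=
  rfl

lemma tinner_eq_sum_mat2 (A B : (Fin (2 * m) → Fin n) → ℝ) :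
    tinner A B = ∑ a, ∑ b, mat2 A a b * mat2 B a b := by
  rw [← Fintype.sum_prod_type']
  exact Fintype.sum_equiv (idxEquiv n m) _ _ fun i => by
    simp only [mat2_apply, Prod.mk.eta, Equiv.symm_apply_apply]

lemma tinner_eq_dotProduct_mulVec (B : (Fin (2 * m) → Fin n) → ℝ)
    {X : (Fin (2 * m) → Fin n) → ℝ} {z : (Fin m → Fin n) → ℝ}
    (hX : ∀ a b, mat2 X a b = z a * z b) :
    tinner B X = z ⬝ᵥ (mat2 B *ᵥ z) := by
  simp only [tinner_eq_sum_mat2, hX, dotProduct, mulVec, Finset.mul_sum]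
  exact Finset.sum_congr rfl fun _ _ => Finset.sum_congr rfl fun _ _ => by ring

lemma tinner_eq_sq_dotProduct {X Y : (Fin (2 * m) → Fin n) → ℝ} {z y : (Fin m → Fin n) → ℝ}
    (hX : ∀ a b, mat2 X a b = z a * z b) (hY : ∀ a b, mat2 Y a b = y a * y b) :
    tinner Y X = (z ⬝ᵥ y) ^ 2 := by
  have hmat : mat2 Y = vecMulVec y y := by ext a b; rw [hY, vecMulVec_apply]
  rw [tinner_eq_dotProduct_mulVec Y hX, hmat, vecMulVec_mulVec, op_smul_eq_smul,
    dotProduct_smul, smul_eq_mul, dotProduct_comm y z, sq]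

lemma tinner_sub_mul (B Y X : (Fin (2 * m) → Fin n) → ℝ) (τ : ℝ) :
    tinner (fun i => B i - τ * Y i) X = tinner B X - τ * tinner Y X := by
  simp only [tinner, sub_mul, Finset.sum_sub_distrib, Finset.mul_sum, mul_assoc]

def rankOneT (z : (Fin m → Fin n) → ℝ) : (Fin (2 * m) → Fin n) → ℝ :=
  fun i => z (idxEquiv n m i).1 * z (idxEquiv n m i).2

lemma mat2_rankOneT (z : (Fin m → Fin n) → ℝ) (a b : Fin m → Fin n) :
    mat2 (rankOneT z) a b = z a * z b := by
  simp [mat2_apply, rankOneT]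

lemma rankOneT_mem_CSet {z : (Fin m → Fin n) → ℝ} (hz : z ⬝ᵥ z = 1) :
    rankOneT z ∈ CSet n m :=
  ⟨z, by rwa [← dotProduct_self_eq_sum_sq], mat2_rankOneT z⟩

end Tensor

theorem stmt7_general {n m : ℕ} (τ : ℝ)
    (Xs Ys Λs : (Fin (2 * m) → Fin n) → ℝ)
    (hMatSymm : (mat2 Λs).IsSymm)
    (hXsC : Xs ∈ CSet n m)
    (hmin : ∀ X ∈ CSet n m,
      tinner (fun i => -Λs i - τ * Ys i) Xs ≤ tinner (fun i => -Λs i - τ * Ys i) X)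
    (hXY : Xs = Ys)
    (σN σN1 : ℝ) (zN : (Fin m → Fin n) → ℝ) (hzN : zN ⬝ᵥ zN = 1)
    (heig : (-mat2 Λs) *ᵥ zN = σN • zN)
    (hsecond : ∀ w : (Fin m → Fin n) → ℝ, w ⬝ᵥ zN = 0 →
      σN1 * (w ⬝ᵥ w) ≤ w ⬝ᵥ ((-mat2 Λs) *ᵥ w))
    (hτ1 : 0 < τ) (hτ2 : τ < σN1 - σN) :
    ∀ X ∈ CSet n m, tinner (fun i => -Λs i) Xs ≤ tinner (fun i => -Λs i) X := by
  rintro X ⟨z, hz, hzX⟩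
  obtain ⟨zs, hzs, hzsX⟩ := hXsC
  rw [← dotProduct_self_eq_sum_sq] at hz hzs
  subst hXY
  have hM : (-mat2 Λs).IsSymm := hMatSymm.neg
  have hobj : ∀ {Y : (Fin (2 * m) → Fin n) → ℝ} {y : (Fin m → Fin n) → ℝ},
      (∀ a b, mat2 Y a b = y a * y b) →
      tinner (fun i => -Λs i) Y = y ⬝ᵥ ((-mat2 Λs) *ᵥ y) :=
    fun hY => tinner_eq_dotProduct_mulVec _ hY
  have hpert : zs ⬝ᵥ ((-mat2 Λs) *ᵥ zs) - τ ≤ σN - τ * (zs ⬝ᵥ zN) ^ 2 := by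
    have h := hmin _ (rankOneT_mem_CSet hzN)
    rw [tinner_sub_mul, tinner_sub_mul, hobj hzsX, hobj (mat2_rankOneT zN),
      tinner_eq_sq_dotProduct hzsX hzsX, tinner_eq_sq_dotProduct (mat2_rankOneT zN) hzsX,
      hzs, heig, dotProduct_smul, hzN, dotProduct_comm zN zs] at h
    simpa using h
  rw [hobj hzsX, hobj hzX]
  exact (dotProduct_mulVec_le_eigenvalue_of_perturbed hM hzN heig hsecond hτ2 hzs
    hpert).trans (eigenvalue_le_dotProduct_mulVec hM hzN heig hsecond (by linarith) hz)

/-- suppose `{X*, Y*, Λ*}` satisfies the perturbed optimality system with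
parameter `τ`, the smallest eigenvalue `σN` of `−Mat(Λ*)` (with unit eigenvector `zN`)
is simple, `σN1` bounds the Rayleigh quotient on the orthogonal complement of `zN`
(i.e. is the second smallest eigenvalue), and `0 < τ < σN1 − σN`.  Then
`⟨−Λ*, X − X*⟩ ≥ 0` for all `X ∈ C`, i.e. `X*` minimizes `⟨−Λ*, ·⟩` over `C`. -/
theorem stmt7 {n m : ℕ} (τ : ℝ)
    (A Xs Ys Λs : (Fin (2 * m) → Fin n) → ℝ) (hA : IsSymT A)
    (hMatSymm : (mat2 Λs).IsSymm)
    (hXsC : Xs ∈ CSet n m)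
    (hmin : ∀ X ∈ CSet n m,
      tinner (fun i => -Λs i - τ * Ys i) Xs ≤ tinner (fun i => -Λs i - τ * Ys i) X)
    (hSym : symT Λs = A) (hXY : Xs = Ys)
    (σN σN1 : ℝ) (zN : (Fin m → Fin n) → ℝ) (hzN : zN ⬝ᵥ zN = 1)
    (heig : (-mat2 Λs) *ᵥ zN = σN • zN)
    (hsecond : ∀ w : (Fin m → Fin n) → ℝ, w ⬝ᵥ zN = 0 →
      σN1 * (w ⬝ᵥ w) ≤ w ⬝ᵥ ((-mat2 Λs) *ᵥ w))
    (hτ1 : 0 < τ) (hτ2 : τ < σN1 - σN) :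
    ∀ X ∈ CSet n m, tinner (fun i => -Λs i) Xs ≤ tinner (fun i => -Λs i) X :=
  stmt7_general τ Xs Ys Λs hMatSymm hXsC hmin hXY σN σN1 zN hzN heig hsecond hτ1 hτ2

end SpherePoly
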